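/- Suppose both the primal feasible set X(b) and the dual feasible set Y(c) are nonempty (so that P* and D* are finite), and let ε > 0. If the point (c, D* − ε) does not belong to the closure of L*_p(K* × C*) = {(A* y − w, ⟨b,y⟩) : y ∈ K*, w ∈ C*}, then D* − P* ≤ ε. Symmetrically, if (b, P* + ε) does not belong to the closure of L*_d(C × K) = {(A x + s, ⟨c,x⟩) : x ∈ C, s ∈ K}, then D* − P* ≤ ε. -/

import Mathlib

open RealInnerProductSpace Set Pointwise

variable {E E' : Type*}
  [NormedAddCommGroup E] [InnerProductSpace ℝ E] [FiniteDimensional ℝ E]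
  [NormedAddCommGroup E'] [InnerProductSpace ℝ E'] [FiniteDimensional ℝ E']

/-- A nonempty closed convex cone containing `0`. -/
structure IsClosedConvexCone {F : Type*} [NormedAddCommGroup F] [InnerProductSpace ℝ F]
    (K : Set F) : Prop where
  closed : IsClosed K
  convex : Convex ℝ K
  smul_mem : ∀ ⦃x⦄, x ∈ K → ∀ ⦃t : ℝ⦄, 0 ≤ t → t • x ∈ K
  zero_mem : (0 : F) ∈ K

/-- The dual cone `S* = {y : ⟨x,y⟩ ≥ 0 ∀ x ∈ S}`. -/
def dualCone {F : Type*} [NormedAddCommGroup F] [InnerProductSpace ℝ F] (S : Set F) : Set F :=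
  {y | ∀ x ∈ S, 0 ≤ ⟪x, y⟫}

/-- The polar cone `S° = {y : ⟨x,y⟩ ≤ 0 ∀ x ∈ S}`. -/
def polarCone {F : Type*} [NormedAddCommGroup F] [InnerProductSpace ℝ F] (S : Set F) : Set F :=
  {y | ∀ x ∈ S, ⟪x, y⟫ ≤ 0}

/-- Primal feasible set `X(b) = {x ∈ C : b - A x ∈ K}`. -/
def Xfeas (A : E →ₗ[ℝ] E') (K : Set E') (C : Set E) (b : E') : Set E :=
  {x | x ∈ C ∧ b - A x ∈ K}

/-- Dual feasible set `Y(c) = {y ∈ K* : A* y - c ∈ C*}`. -/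
def Yfeas (A : E →ₗ[ℝ] E') (K : Set E') (C : Set E) (c : E) : Set E' :=
  {y | y ∈ dualCone K ∧ LinearMap.adjoint A y - c ∈ dualCone C}

/-- Primal optimal value `P* = sup {⟨c,x⟩ : x ∈ X(b)}`. -/
noncomputable def Pval (A : E →ₗ[ℝ] E') (K : Set E') (C : Set E) (b : E') (c : E) : ℝ :=
  sSup ((fun x => ⟪c, x⟫) '' Xfeas A K C b)

/-- Dual optimal value `D* = inf {⟨b,y⟩ : y ∈ Y(c)}`. -/
noncomputable def Dval (A : E →ₗ[ℝ] E') (K : Set E') (C : Set E) (b : E') (c : E) : ℝ :=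
  sInf ((fun y => ⟪b, y⟫) '' Yfeas A K C c)

/-- Recession cone of the primal feasible region: `{x ∈ C : A x ∈ -K}`. -/
def recXSet (A : E →ₗ[ℝ] E') (K : Set E') (C : Set E) : Set E :=
  {x | x ∈ C ∧ A x ∈ -K}

/-- Recession cone of the dual feasible region: `{y ∈ K* : A* y ∈ C*}`. -/
def recYSet (A : E →ₗ[ℝ] E') (K : Set E') (C : Set E) : Set E' :=
  {y | y ∈ dualCone K ∧ LinearMap.adjoint A y ∈ dualCone C}

/-- `X(b)` is almost feasible. -/
def AlmostFeasX (A : E →ₗ[ℝ] E') (K : Set E') (C : Set E) (b : E') : Prop :=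
  ∀ ε : ℝ, 0 < ε → ∃ bε : E', ‖bε‖ ≤ ε ∧ (Xfeas A K C (b + bε)).Nonempty

/-- `Y(c)` is almost feasible. -/
def AlmostFeasY (A : E →ₗ[ℝ] E') (K : Set E') (C : Set E) (c : E) : Prop :=
  ∀ ε : ℝ, 0 < ε → ∃ cε : E, ‖cε‖ ≤ ε ∧ (Yfeas A K C (c + cε)).Nonempty


/-!
Weak duality bounds `P*` above by every dual value and `D*` below by every primal value, so it
suffices to find a primal point of value `> D* - ε` (resp. a dual point of value `< P* + ε`).
If `(c, D* - ε)` is strictly separated from the cone `L*_p(K* × C*)` by a functional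
`(x, r) ↦ ⟪u, x⟫ + s r` that is nonnegative on the cone, testing it on `(-w, 0)` and
`(A* y, ⟪b, y⟫)` and using the bipolar theorem gives `-u ∈ C` and `A u + s b ∈ K`; a dual
feasible point forces `s > 0`, and then `-u / s` is such a primal point.

The second statement is the first one for the dual program written as a primal one, with data
`(-A*, C*, K*, -c, -b)`: by the bipolar theorem its dual program is the original primal one, and
its cone `L*_p` is `-L*_d(C × K)`.
-/

namespace IsClosedConvexCone

variable {F : Type*} [NormedAddCommGroup F] [InnerProductSpace ℝ F] {K : Set F}

lemma add_mem (hK : IsClosedConvexCone K) {x y : F} (hx : x ∈ K) (hy : y ∈ K) :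
    x + y ∈ K := by
  have hmid := hK.convex hx hy (by norm_num : (0 : ℝ) ≤ 1 / 2)
    (by norm_num : (0 : ℝ) ≤ 1 / 2) (by norm_num)
  convert hK.smul_mem hmid (by norm_num : (0 : ℝ) ≤ 2) using 1
  module

def toProperCone (hK : IsClosedConvexCone K) : ProperCone ℝ F where
  carrier := K
  add_mem' := hK.add_mem
  zero_mem' := hK.zero_mem
  smul_mem' c _ hx := hK.smul_mem hx c.2
  isClosed' := hK.closed

lemma dualCone_dualCone [CompleteSpace F] (hK : IsClosedConvexCone K) :
    dualCone (dualCone K) = K :=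
  congrArg SetLike.coe (ProperCone.innerDual_innerDual hK.toProperCone)

end IsClosedConvexCone

lemma isClosedConvexCone_dualCone {F : Type*} [NormedAddCommGroup F] [InnerProductSpace ℝ F]
    [CompleteSpace F] (S : Set F) : IsClosedConvexCone (dualCone S) where
  closed := (ProperCone.innerDual S).isClosed
  convex := (ProperCone.innerDual S).convex
  smul_mem _ hx _ ht := (ProperCone.innerDual S).smul_mem hx ht
  zero_mem := (ProperCone.innerDual S).zero_mem

section Separation

variable {F : Type*} [NormedAddCommGroup F] [InnerProductSpace ℝ F] [CompleteSpace F]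

lemma StrongDual.exists_inner_add_mul_eq (f : StrongDual ℝ (F × ℝ)) :
    ∃ (u : F) (s : ℝ), ∀ q : F × ℝ, f q = ⟪u, q.1⟫ + s * q.2 := by
  refine ⟨(InnerProductSpace.toDual ℝ F).symm (f.comp (.inl ℝ F ℝ)), f (0, 1),
    fun q => ?_⟩
  rw [← f.comp_inl_add_comp_inr q, InnerProductSpace.toDual_symm_apply]
  have hq2 : ((0 : F), q.2) = q.2 • ((0 : F), (1 : ℝ)) := by simp
  simp only [ContinuousLinearMap.comp_apply, ContinuousLinearMap.inl_apply,
    ContinuousLinearMap.inr_apply, hq2, map_smul, smul_eq_mul, mul_comm]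

lemma exists_inner_add_mul_nonneg_of_notMem_closure
    (L : PointedCone ℝ (F × ℝ)) {p : F × ℝ} (hp : p ∉ closure (L : Set (F × ℝ))) :
    ∃ (u : F) (s : ℝ),
      (∀ q ∈ L, 0 ≤ ⟪u, q.1⟫ + s * q.2) ∧ ⟪u, p.1⟫ + s * p.2 < 0 := by
  obtain ⟨f, hfL, hfp⟩ := ProperCone.hyperplane_separation_point (Submodule.closure L) hp
  obtain ⟨u, s, hf⟩ := f.exists_inner_add_mul_eq
  exact ⟨u, s, fun q hq => hf q ▸ hfL q (subset_closure hq), hf p ▸ hfp⟩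

end Separation

section ConicProgram

variable (A : E →ₗ[ℝ] E') (K : Set E') (C : Set E) (b : E') (c : E)

/-- The cone `L*_p(K* × C*)`: its elements are the pairs `(c', ⟪b, y⟫)` with `y ∈ Y(c')`. -/
def dualValueCone : PointedCone ℝ (E × ℝ) where
  carrier :=
    {p | ∃ y ∈ dualCone K, ∃ w ∈ dualCone C, p = (LinearMap.adjoint A y - w, ⟪b, y⟫)}
  add_mem' := by
    rintro _ _ ⟨y, hy, w, hw, rfl⟩ ⟨y', hy', w', hw', rfl⟩
    refine ⟨y + y', (isClosedConvexCone_dualCone K).add_mem hy hy', w + w',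
      (isClosedConvexCone_dualCone C).add_mem hw hw', ?_⟩
    ext
    · simp only [Prod.fst_add, map_add]
      abel
    · simp only [Prod.snd_add, inner_add_right]
  zero_mem' := ⟨0, (isClosedConvexCone_dualCone K).zero_mem, 0,
    (isClosedConvexCone_dualCone C).zero_mem, by simp [Prod.ext_iff]⟩
  smul_mem' := by
    rintro t _ ⟨y, hy, w, hw, rfl⟩
    refine ⟨(t : ℝ) • y, (isClosedConvexCone_dualCone K).smul_mem hy t.2, (t : ℝ) • w,
      (isClosedConvexCone_dualCone C).smul_mem hw t.2, ?_⟩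
    ext <;> simp [smul_sub, ← Nonneg.coe_smul, real_inner_smul_right]

variable {A K C b c}

lemma inner_le_inner_of_mem_Xfeas_of_mem_Yfeas {x : E} (hx : x ∈ Xfeas A K C b) {y : E'}
    (hy : y ∈ Yfeas A K C c) : ⟪c, x⟫ ≤ ⟪b, y⟫ := by
  have hC := hy.2 x hx.1
  have hK := hy.1 _ hx.2
  rw [inner_sub_right, LinearMap.adjoint_inner_right, real_inner_comm c] at hC
  rw [inner_sub_left] at hK
  linarith

lemma inner_le_Pval (hY : (Yfeas A K C c).Nonempty) {x : E} (hx : x ∈ Xfeas A K C b) :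
    ⟪c, x⟫ ≤ Pval A K C b c := by
  obtain ⟨y, hy⟩ := hY
  refine le_csSup ⟨⟪b, y⟫, ?_⟩ ⟨x, hx, rfl⟩
  rintro _ ⟨x', hx', rfl⟩
  exact inner_le_inner_of_mem_Xfeas_of_mem_Yfeas hx' hy

lemma Dval_le_inner (hX : (Xfeas A K C b).Nonempty) {y : E'} (hy : y ∈ Yfeas A K C c) :
    Dval A K C b c ≤ ⟪b, y⟫ := by
  obtain ⟨x, hx⟩ := hX
  refine csInf_le ⟨⟪c, x⟫, ?_⟩ ⟨y, hy, rfl⟩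
  rintro _ ⟨y', hy', rfl⟩
  exact inner_le_inner_of_mem_Xfeas_of_mem_Yfeas hx hy'

theorem exists_mem_Xfeas_lt_inner_of_notMem_closure (hK : IsClosedConvexCone K)
    (hC : IsClosedConvexCone C) {r : ℝ} (hr : ∃ y ∈ Yfeas A K C c, r ≤ ⟪b, y⟫)
    (hcl : (c, r) ∉ closure (dualValueCone A K C b : Set (E × ℝ))) :
    ∃ x ∈ Xfeas A K C b, r < ⟪c, x⟫ := by
  obtain ⟨u, s, hL, hsep⟩ := exists_inner_add_mul_nonneg_of_notMem_closure _ hcl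
  obtain ⟨y₀, hy₀, hry₀⟩ := hr
  have hs : 0 < s := by
    by_contra! hs
    have hy₀L := hL (c, ⟪b, y₀⟫) ⟨y₀, hy₀.1, _, hy₀.2, by simp⟩
    dsimp only at hy₀L hsep
    linarith [mul_le_mul_of_nonpos_left hry₀ hs]
  have hu : -u ∈ C := by
    rw [← hC.dualCone_dualCone]
    intro w hw
    have hwL := hL _ ⟨0, (isClosedConvexCone_dualCone K).zero_mem, w, hw, rfl⟩
    simpa [real_inner_comm] using hwL
  have hAu : A u + s • b ∈ K := by
    rw [← hK.dualCone_dualCone]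
    intro y hy
    have hyL := hL _ ⟨y, hy, 0, (isClosedConvexCone_dualCone C).zero_mem, rfl⟩
    rw [inner_add_right, real_inner_smul_right, real_inner_comm]
    simpa [LinearMap.adjoint_inner_right, real_inner_comm b] using hyL
  refine ⟨s⁻¹ • -u, ⟨hC.smul_mem hu (by positivity), ?_⟩, ?_⟩
  · convert hK.smul_mem hAu (inv_nonneg.2 hs.le) using 1
    simp [smul_add, smul_smul, hs.ne', add_comm]
  · rw [real_inner_smul_right, inner_neg_right, real_inner_comm, lt_inv_mul_iff₀ hs]
    simp only at hsep
    linarith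

lemma Xfeas_neg_adjoint :
    Xfeas (-LinearMap.adjoint A) (dualCone C) (dualCone K) (-c) = Yfeas A K C c := by
  ext y
  simp [Xfeas, Yfeas, neg_add_eq_sub]

lemma Yfeas_neg_adjoint (hK : IsClosedConvexCone K) (hC : IsClosedConvexCone C) :
    Yfeas (-LinearMap.adjoint A) (dualCone C) (dualCone K) (-b) = Xfeas A K C b := by
  ext x
  simp [Xfeas, Yfeas, hK.dualCone_dualCone, hC.dualCone_dualCone, neg_add_eq_sub]

lemma coe_dualValueCone_neg_adjoint (hK : IsClosedConvexCone K) (hC : IsClosedConvexCone C) :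
    (dualValueCone (-LinearMap.adjoint A) (dualCone C) (dualCone K) (-c) : Set (E' × ℝ)) =
      -{p | ∃ x ∈ C, ∃ s ∈ K, p = (A x + s, ⟪c, x⟫)} := by
  ext p
  simp [dualValueCone, hK.dualCone_dualCone, hC.dualCone_dualCone, neg_eq_iff_eq_neg,
    neg_add_eq_sub]

theorem exists_mem_Yfeas_inner_lt_of_notMem_closure (hK : IsClosedConvexCone K)
    (hC : IsClosedConvexCone C) {r : ℝ} (hr : ∃ x ∈ Xfeas A K C b, ⟪c, x⟫ ≤ r)
    (hcl : (b, r) ∉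
      closure {p : E' × ℝ | ∃ x ∈ C, ∃ s ∈ K, p = (A x + s, ⟪c, x⟫)}) :
    ∃ y ∈ Yfeas A K C c, ⟪b, y⟫ < r := by
  obtain ⟨x, hx, hxr⟩ := hr
  obtain ⟨y, hy, hry⟩ :=
    exists_mem_Xfeas_lt_inner_of_notMem_closure (b := -c) (c := -b) (r := -r)
    (isClosedConvexCone_dualCone C) (isClosedConvexCone_dualCone K)
    ⟨x, (Yfeas_neg_adjoint hK hC).symm ▸ hx, by simpa using hxr⟩
    (by rwa [coe_dualValueCone_neg_adjoint hK hC, ← neg_closure, Set.mem_neg, Prod.neg_mk,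
      neg_neg, neg_neg])
  exact ⟨y, Xfeas_neg_adjoint (A := A) ▸ hy, by simpa using hry⟩

end ConicProgram

theorem stmt6 (A : E →ₗ[ℝ] E') (K : Set E') (C : Set E)
    (hK : IsClosedConvexCone K) (hC : IsClosedConvexCone C) (b : E') (c : E)
    (hXne : (Xfeas A K C b).Nonempty) (hYne : (Yfeas A K C c).Nonempty)
    (ε : ℝ) (hε : 0 < ε) :
    ((c, Dval A K C b c - ε) ∉
        closure {p : E × ℝ | ∃ y ∈ dualCone K, ∃ w ∈ dualCone C,
          p = (LinearMap.adjoint A y - w, ⟪b, y⟫)} →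
      Dval A K C b c - Pval A K C b c ≤ ε) ∧
    ((b, Pval A K C b c + ε) ∉
        closure {p : E' × ℝ | ∃ x ∈ C, ∃ s ∈ K, p = (A x + s, ⟪c, x⟫)} →
      Dval A K C b c - Pval A K C b c ≤ ε) := by
  constructor
  · intro hcl
    have ⟨y₀, hy₀⟩ := hYne
    obtain ⟨x, hx, hlt⟩ := exists_mem_Xfeas_lt_inner_of_notMem_closure hK hC
      ⟨y₀, hy₀, by linarith [Dval_le_inner hXne hy₀]⟩ hcl
    linarith [inner_le_Pval hYne hx]
  · intro hcl
    have ⟨x₀, hx₀⟩ := hXne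
    obtain ⟨y, hy, hlt⟩ := exists_mem_Yfeas_inner_lt_of_notMem_closure hK hC
      ⟨x₀, hx₀, by linarith [inner_le_Pval hYne hx₀]⟩ hcl
    linarith [Dval_le_inner hXne hy]
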